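/- For bounded controls (ℓ̄ < +∞), the simplified value function satisfies the upper bound W(h₀) ≤ (ℓ̄^{1−σ}/(1−σ)) · h₀^{γ(σ−1)} / (ρ + φγ(σ−1)) for every h₀ > 0; in particular W(h₀) ≤ c₁ h₀^{γ(σ−1)}/(1−σ) with the positive constant c₁ = ℓ̄^{1−σ}/(ρ + φγ(σ−1)). (This follows from the pointwise trajectory bound h^{h₀,ℓ}(t) ≥ e^{−φt} h₀ valid for every admissible control.) -/

import Mathlib

open MeasureTheory Real Set Filter

/-- State trajectory `h^{h₀,ℓ}(t) = e^{−φt} h₀ + φ ∫₀ᵗ e^{−φ(t−s)} ℓ(s) ds`. -/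
noncomputable def traj (φ h₀ : ℝ) (ℓ : ℝ → ℝ) (t : ℝ) : ℝ :=
  Real.exp (-(φ * t)) * h₀ + φ * ∫ s in (0:ℝ)..t, Real.exp (-(φ * (t - s))) * ℓ s

/-- Payoff `J(h₀,ℓ) = ∫₀^∞ e^{−ρt} ℓ(t)^{1−σ} (h^{h₀,ℓ}(t))^{γ(σ−1)} / (1−σ) dt`. -/
noncomputable def payoff (ρ φ σ γ h₀ : ℝ) (ℓ : ℝ → ℝ) : ℝ :=
  ∫ t in Set.Ioi (0:ℝ),
    Real.exp (-(ρ * t)) * (ℓ t ^ (1 - σ)) * (traj φ h₀ ℓ t ^ (γ * (σ - 1))) / (1 - σ)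

/-- Admissible controls: measurable, with values in `[ℓ̲, ℓ̄]` (where `ℓ̄` may be `+∞`). -/
def Admissible (lo : ℝ) (hi : EReal) (ℓ : ℝ → ℝ) : Prop :=
  Measurable ℓ ∧ ∀ t, 0 ≤ t → lo ≤ ℓ t ∧ (ℓ t : EReal) ≤ hi

/-- Simplified value function `W`. -/
noncomputable def W (ρ φ σ γ lo : ℝ) (hi : EReal) (h₀ : ℝ) : ℝ :=
  sSup {x | ∃ ℓ : ℝ → ℝ, Admissible lo hi ℓ ∧ x = payoff ρ φ σ γ h₀ ℓ}

/-!
Since controls are nonnegative, every admissible trajectory dominates the free decay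
`e^{−φt} h₀`. As `1 − σ < 0` and `ℓ ≤ ℓ̄`, the payoff integrand is therefore bounded above by
`ℓ̄^{1−σ} h₀^{γ(σ−1)} e^{−(ρ+φγ(σ−1))t} / (1 − σ)`, whose integral over `(0, ∞)` is the claimed
bound. Comparing integrals requires the payoff integrand to be integrable; it is dominated by a
multiple of `e^{−ρt}` because `ℓ ≥ ℓ̲ > 0` and the trajectory, a convex combination of `h₀` and
values of `ℓ`, stays below `max h₀ ℓ̄`.
-/

theorem intervalIntegral_exp_mul {φ : ℝ} (hφ : φ ≠ 0) (t : ℝ) :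
    ∫ s in (0:ℝ)..t, exp (φ * s) = (exp (φ * t) - 1) / φ := by
  rw [intervalIntegral.integral_comp_mul_left (fun s => exp s) hφ, integral_exp, mul_zero,
    exp_zero, smul_eq_mul, inv_mul_eq_div]

theorem intervalIntegrable_of_mem_Icc {ℓ : ℝ → ℝ} {lo hi : ℝ} (hm : Measurable ℓ)
    (hℓ : ∀ s, ℓ s ∈ Icc lo hi) (a b : ℝ) : IntervalIntegrable ℓ volume a b :=
  (intervalIntegrable_const (c := max |lo| |hi|)).mono_fun' hm.aestronglyMeasurable
    (ae_of_all _ fun s => abs_le_max_abs_abs (hℓ s).1 (hℓ s).2)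

section Trajectory

variable {φ h₀ : ℝ} {ℓ : ℝ → ℝ}

theorem traj_eq_exp_mul (φ h₀ : ℝ) (ℓ : ℝ → ℝ) (t : ℝ) :
    traj φ h₀ ℓ t = exp (-(φ * t)) * (h₀ + φ * ∫ s in (0:ℝ)..t, exp (φ * s) * ℓ s) := by
  have hsplit : (fun s => exp (-(φ * (t - s))) * ℓ s)
      = fun s => exp (-(φ * t)) * (exp (φ * s) * ℓ s) := by
    funext s
    rw [← mul_assoc, ← exp_add]
    ring_nf
  rw [traj, hsplit, intervalIntegral.integral_const_mul]
  ring

theorem traj_congr {ℓ' : ℝ → ℝ} (h : EqOn ℓ ℓ' (Ici 0)) {t : ℝ} (ht : 0 ≤ t) :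
    traj φ h₀ ℓ t = traj φ h₀ ℓ' t := by
  refine congrArg _ (congrArg _ (intervalIntegral.integral_congr fun s hs => ?_))
  rw [uIcc_of_le ht] at hs
  simp only [h hs.1]

theorem continuous_traj (hℓ : ∀ a b, IntervalIntegrable ℓ volume a b) :
    Continuous (traj φ h₀ ℓ) := by
  have hprim : Continuous fun t => ∫ s in (0:ℝ)..t, exp (φ * s) * ℓ s :=
    intervalIntegral.continuous_primitive
      (fun a b => (hℓ a b).continuousOn_mul (by fun_prop)) 0
  rw [funext (traj_eq_exp_mul φ h₀ ℓ)]
  fun_prop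

theorem exp_mul_le_traj (hφ : 0 ≤ φ) {t : ℝ} (ht : 0 ≤ t) (hℓ : ∀ s ∈ Icc 0 t, 0 ≤ ℓ s) :
    exp (-(φ * t)) * h₀ ≤ traj φ h₀ ℓ t := by
  have hint : 0 ≤ ∫ s in (0:ℝ)..t, exp (-(φ * (t - s))) * ℓ s :=
    intervalIntegral.integral_nonneg ht fun s hs => mul_nonneg (exp_pos _).le (hℓ s hs)
  rw [traj]
  nlinarith

theorem traj_le_max (hφ : 0 < φ) {t : ℝ} (ht : 0 ≤ t) {hi : ℝ}
    (hint : IntervalIntegrable ℓ volume 0 t) (hℓ : ∀ s ∈ Icc 0 t, ℓ s ≤ hi) :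
    traj φ h₀ ℓ t ≤ max h₀ hi := by
  have hmono : ∫ s in (0:ℝ)..t, exp (φ * s) * ℓ s ≤ ∫ s in (0:ℝ)..t, exp (φ * s) * hi :=
    intervalIntegral.integral_mono_on ht (hint.continuousOn_mul (by fun_prop))
      (Continuous.intervalIntegrable (by fun_prop) _ _)
      fun s hs => mul_le_mul_of_nonneg_left (hℓ s hs) (exp_pos _).le
  rw [intervalIntegral.integral_mul_const, intervalIntegral_exp_mul hφ.ne'] at hmono
  have hconvex : traj φ h₀ ℓ t ≤ exp (-(φ * t)) * h₀ + (1 - exp (-(φ * t))) * hi := by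
    have hinv : exp (-(φ * t)) * exp (φ * t) = 1 := by rw [← exp_add]; simp
    have hφI := mul_le_mul_of_nonneg_left hmono hφ.le
    rw [div_mul_eq_mul_div, mul_div_cancel₀ _ hφ.ne'] at hφI
    calc traj φ h₀ ℓ t
        ≤ exp (-(φ * t)) * (h₀ + (exp (φ * t) - 1) * hi) := by
          rw [traj_eq_exp_mul]; gcongr
      _ = exp (-(φ * t)) * h₀ + (1 - exp (-(φ * t))) * hi := by
          linear_combination hi * hinv
  have hexp : exp (-(φ * t)) ≤ 1 := exp_le_one_iff.mpr (by nlinarith)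
  nlinarith [le_max_left h₀ hi, le_max_right h₀ hi, exp_pos (-(φ * t))]

end Trajectory

theorem integral_mul_exp_neg_mul_Ioi (c : ℝ) {r : ℝ} (hr : 0 < r) :
    ∫ t in Ioi (0:ℝ), c * exp (-r * t) = c / r := by
  rw [integral_const_mul, integral_exp_mul_Ioi (neg_neg_of_pos hr), mul_zero, exp_zero]
  field_simp

section Payoff

variable {ρ φ σ γ lo hi h₀ : ℝ} {ℓ : ℝ → ℝ}

theorem payoff_congr {ℓ' : ℝ → ℝ} (h : EqOn ℓ ℓ' (Ici 0)) :
    payoff ρ φ σ γ h₀ ℓ = payoff ρ φ σ γ h₀ ℓ' :=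
  setIntegral_congr_fun measurableSet_Ioi fun t ht => by
    rw [h (mem_Ici.2 (mem_Ioi.1 ht).le), traj_congr h (mem_Ioi.1 ht).le]

/- Not a formality: a non-integrable integrand would make the payoff `0`, above the negative
bound. -/
theorem integrableOn_payoff_integrand (hρ : 0 < ρ) (hφ : 0 < φ) (hσ : 1 ≤ σ) (hγ : 0 ≤ γ)
    (hlo : 0 < lo) (hh₀ : 0 ≤ h₀) (hm : Measurable ℓ) (hℓ : ∀ s, ℓ s ∈ Icc lo hi) :
    IntegrableOn (fun t => exp (-(ρ * t)) * ℓ t ^ (1 - σ) * traj φ h₀ ℓ t ^ (γ * (σ - 1))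
      / (1 - σ)) (Ioi 0) := by
  have hint := intervalIntegrable_of_mem_Icc hm hℓ
  have hp : 0 ≤ γ * (σ - 1) := mul_nonneg hγ (by linarith)
  have htraj : Measurable (traj φ h₀ ℓ) := (continuous_traj hint).measurable
  refine ((exp_neg_integrableOn_Ioi 0 hρ).const_mul
    (lo ^ (1 - σ) * max h₀ hi ^ (γ * (σ - 1)) / |1 - σ|)).mono'
    (by fun_prop : Measurable _).aestronglyMeasurable
    ((ae_restrict_iff' measurableSet_Ioi).2 (ae_of_all _ fun t ht => ?_))
  have hℓpos := hlo.trans_le (hℓ t).1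
  have htraj0 : 0 ≤ traj φ h₀ ℓ t := (mul_nonneg (exp_pos _).le hh₀).trans
    (exp_mul_le_traj hφ.le (le_of_lt ht) fun s _ => hlo.le.trans (hℓ s).1)
  rw [norm_div, norm_mul, norm_mul, norm_of_nonneg (exp_pos _).le,
    norm_of_nonneg (rpow_nonneg hℓpos.le _), norm_of_nonneg (rpow_nonneg htraj0 _),
    Real.norm_eq_abs]
  calc exp (-(ρ * t)) * ℓ t ^ (1 - σ) * traj φ h₀ ℓ t ^ (γ * (σ - 1)) / |1 - σ|
      ≤ exp (-(ρ * t)) * lo ^ (1 - σ) * max h₀ hi ^ (γ * (σ - 1)) / |1 - σ| := by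
        gcongr _ * ?_ * ?_ / _
        · exact rpow_le_rpow_of_nonpos hlo (hℓ t).1 (by linarith)
        · exact rpow_le_rpow htraj0
            (traj_le_max hφ (le_of_lt ht) (hint 0 t) fun s _ => (hℓ s).2) hp
    _ = lo ^ (1 - σ) * max h₀ hi ^ (γ * (σ - 1)) / |1 - σ| * exp (-ρ * t) := by ring_nf

theorem payoff_integrand_le (hφ : 0 ≤ φ) (hσ : 1 ≤ σ) (hγ : 0 ≤ γ) (hlo : 0 < lo)
    (hh₀ : 0 ≤ h₀) (hℓ : ∀ s, ℓ s ∈ Icc lo hi) {t : ℝ} (ht : 0 ≤ t) :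
    exp (-(ρ * t)) * ℓ t ^ (1 - σ) * traj φ h₀ ℓ t ^ (γ * (σ - 1)) / (1 - σ)
      ≤ hi ^ (1 - σ) / (1 - σ) * h₀ ^ (γ * (σ - 1)) * exp (-(ρ + φ * γ * (σ - 1)) * t) := by
  have hp : 0 ≤ γ * (σ - 1) := mul_nonneg hγ (by linarith)
  have hcompare : exp (-(ρ * t)) * hi ^ (1 - σ) * (exp (-(φ * t)) * h₀) ^ (γ * (σ - 1))
      ≤ exp (-(ρ * t)) * ℓ t ^ (1 - σ) * traj φ h₀ ℓ t ^ (γ * (σ - 1)) := by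
    have hℓpos := hlo.trans_le (hℓ t).1
    refine mul_le_mul (mul_le_mul_of_nonneg_left ?_ (exp_pos _).le) ?_
      (rpow_nonneg (by positivity) _) (mul_nonneg (exp_pos _).le (rpow_nonneg hℓpos.le _))
    · exact rpow_le_rpow_of_nonpos hℓpos (hℓ t).2 (by linarith)
    · exact rpow_le_rpow (by positivity)
        (exp_mul_le_traj hφ ht fun s _ => hlo.le.trans (hℓ s).1) hp
  have hexp : exp (-(ρ + φ * γ * (σ - 1)) * t)
      = exp (-(ρ * t)) * exp (-(φ * t)) ^ (γ * (σ - 1)) := by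
    rw [← exp_mul, ← exp_add]
    ring_nf
  calc exp (-(ρ * t)) * ℓ t ^ (1 - σ) * traj φ h₀ ℓ t ^ (γ * (σ - 1)) / (1 - σ)
      ≤ exp (-(ρ * t)) * hi ^ (1 - σ) * (exp (-(φ * t)) * h₀) ^ (γ * (σ - 1)) / (1 - σ) :=
        div_le_div_of_nonpos_of_le (by linarith) hcompare
    _ = hi ^ (1 - σ) / (1 - σ) * h₀ ^ (γ * (σ - 1)) * exp (-(ρ + φ * γ * (σ - 1)) * t) := by
        rw [hexp, mul_rpow (exp_pos _).le hh₀]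
        ring

theorem payoff_le_of_mem_Icc (hρ : 0 < ρ) (hφ : 0 < φ) (hσ : 1 ≤ σ) (hγ : 0 ≤ γ)
    (hlo : 0 < lo) (hh₀ : 0 ≤ h₀) (hm : Measurable ℓ) (hℓ : ∀ s, ℓ s ∈ Icc lo hi) :
    payoff ρ φ σ γ h₀ ℓ
      ≤ hi ^ (1 - σ) / (1 - σ) * h₀ ^ (γ * (σ - 1)) / (ρ + φ * γ * (σ - 1)) := by
  have hrate : 0 < ρ + φ * γ * (σ - 1) :=
    add_pos_of_pos_of_nonneg hρ (mul_nonneg (mul_nonneg hφ.le hγ) (sub_nonneg.2 hσ))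
  calc payoff ρ φ σ γ h₀ ℓ
      ≤ ∫ t in Ioi (0:ℝ), hi ^ (1 - σ) / (1 - σ) * h₀ ^ (γ * (σ - 1))
          * exp (-(ρ + φ * γ * (σ - 1)) * t) :=
        setIntegral_mono_on (integrableOn_payoff_integrand hρ hφ hσ hγ hlo hh₀ hm hℓ)
          ((exp_neg_integrableOn_Ioi 0 hrate).const_mul _) measurableSet_Ioi
          fun t ht => payoff_integrand_le hφ.le hσ hγ hlo hh₀ hℓ (le_of_lt ht)
    _ = _ := integral_mul_exp_neg_mul_Ioi _ hrate

theorem payoff_le_of_admissible (hρ : 0 < ρ) (hφ : 0 < φ) (hσ : 1 ≤ σ) (hγ : 0 ≤ γ)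
    (hlo : 0 < lo) (hh₀ : 0 ≤ h₀) (hℓ : Admissible lo hi ℓ) :
    payoff ρ φ σ γ h₀ ℓ
      ≤ hi ^ (1 - σ) / (1 - σ) * h₀ ^ (γ * (σ - 1)) / (ρ + φ * γ * (σ - 1)) := by
  obtain ⟨hm, hbounds⟩ := hℓ
  -- Freezing ℓ at ℓ 0 on negative times leaves the payoff unchanged and makes ℓ globally bounded.
  rw [payoff_congr (ℓ' := fun s => ℓ (max s 0))
    fun s hs => congrArg ℓ (max_eq_left (mem_Ici.1 hs)).symm]
  refine payoff_le_of_mem_Icc hρ hφ hσ hγ hlo hh₀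
    (hm.comp (measurable_id.max measurable_const)) fun s => ?_
  obtain ⟨hlo_le, hle_hi⟩ := hbounds _ (le_max_right s 0)
  exact ⟨hlo_le, EReal.coe_le_coe_iff.1 hle_hi⟩

end Payoff

theorem W_upper_bound_general (ρ φ σ γ lo hi : ℝ)
    (hρ : 0 < ρ) (hφ : 0 < φ) (hσ : 1 < σ) (hγ0 : 0 < γ)
    (hlo : 0 < lo) (hlohi : lo ≤ hi)
    (h₀ : ℝ) (hh₀ : 0 < h₀) :
    W ρ φ σ γ lo (hi : EReal) h₀ ≤
      (hi ^ (1 - σ) / (1 - σ)) * h₀ ^ (γ * (σ - 1)) / (ρ + φ * γ * (σ - 1)) := by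
  refine csSup_le ⟨_, fun _ => lo,
    ⟨measurable_const, fun _ _ => ⟨le_rfl, EReal.coe_le_coe_iff.2 hlohi⟩⟩, rfl⟩ ?_
  rintro _ ⟨ℓ, hℓ, rfl⟩
  exact payoff_le_of_admissible hρ hφ hσ.le hγ0.le hlo hh₀.le hℓ

/-- for bounded controls, the simplified value function satisfies the
upper bound `W(h₀) ≤ (ℓ̄^{1−σ}/(1−σ)) · h₀^{γ(σ−1)} / (ρ + φγ(σ−1))` for `h₀ > 0`. -/
theorem W_upper_bound (ρ φ σ γ lo hi : ℝ)
    (hρ : 0 < ρ) (hφ : 0 < φ) (hσ : 1 < σ) (hγ0 : 0 < γ) (hγ1 : γ < 1)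
    (hγσ : 1 < γ * (σ - 1)) (hlo : 0 < lo) (hlohi : lo ≤ hi)
    (h₀ : ℝ) (hh₀ : 0 < h₀) :
    W ρ φ σ γ lo (hi : EReal) h₀ ≤
      (hi ^ (1 - σ) / (1 - σ)) * h₀ ^ (γ * (σ - 1)) / (ρ + φ * γ * (σ - 1)) :=
  W_upper_bound_general ρ φ σ γ lo hi hρ hφ hσ hγ0 hlo hlohi h₀ hh₀
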